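/- For every t > 0 and all m, n ≥ 1, the following near-supermultiplicativity holds: 𝔼(e^{t H_{m+n}})² ≥ 𝔼(e^{t H_m}) · 𝔼(e^{t H_n}) · (𝔼(e^{t ξ_1}))^{m+n}, where 𝔼(e^{t ξ_1}) = 1 + (e^t − 1) a_0. -/

import Mathlib

/-!
Write `M k = 𝔼 exp (t H_k)` and `c = 1 + (eᵗ - 1) a₀ = 𝔼 exp (t ξ₁)`. Since `ξ_{k+1} ∈ {0, 1}`,
`exp (t H_{k+1}) = exp (t H_k) + (eᵗ - 1) exp (t H_k) ξ_{k+1}`, and conditioning on `ξ₁, …, ξ_k`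
replaces `ξ_{k+1}` by its conditional intensity, which is at least `a₀`. Hence `M (k+1) ≥ c M k`,
so `M (m+n)` dominates both `cⁿ M m` and `cᵐ M n`, and multiplying the two bounds gives the claim.
-/

open MeasureTheory

lemma Real.exp_mul_of_eq_zero_or_eq_one {x : ℝ} (t : ℝ) (hx : x = 0 ∨ x = 1) :
    Real.exp (t * x) = 1 + (Real.exp t - 1) * x := by
  rcases hx with rfl | rfl <;> simp

lemma Set.mem_Icc_zero_one_of_eq_zero_or_eq_one {x : ℝ} (hx : x = 0 ∨ x = 1) :
    x ∈ Set.Icc (0 : ℝ) 1 := by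
  rcases hx with rfl | rfl <;> simp

lemma pow_mul_le_of_mul_le_succ {u : ℕ → ℝ} {c : ℝ} {k₀ k : ℕ} (hc : 0 ≤ c)
    (h : ∀ k, k₀ ≤ k → c * u k ≤ u (k + 1)) (hk : k₀ ≤ k) : ∀ j, c ^ j * u k ≤ u (k + j)
  | 0 => by simp
  | j + 1 =>
    calc c ^ (j + 1) * u k = c * (c ^ j * u k) := by ring
      _ ≤ c * u (k + j) := mul_le_mul_of_nonneg_left (pow_mul_le_of_mul_le_succ hc h hk j) hc
      _ ≤ u (k + (j + 1)) := h _ (by omega)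

lemma mul_mul_pow_add_le_sq_of_mul_le_succ {u : ℕ → ℝ} {c : ℝ} {k₀ m n : ℕ} (hc : 0 ≤ c)
    (hu : ∀ k, 0 ≤ u k) (h : ∀ k, k₀ ≤ k → c * u k ≤ u (k + 1)) (hm : k₀ ≤ m) (hn : k₀ ≤ n) :
    u m * u n * c ^ (m + n) ≤ u (m + n) ^ 2 := by
  have hmn : c ^ n * u m ≤ u (m + n) := pow_mul_le_of_mul_le_succ hc h hm n
  have hnm : c ^ m * u n ≤ u (m + n) := add_comm n m ▸ pow_mul_le_of_mul_le_succ hc h hn m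
  calc u m * u n * c ^ (m + n) = (c ^ n * u m) * (c ^ m * u n) := by ring
    _ ≤ u (m + n) * u (m + n) :=
      mul_le_mul hmn hnm (by have := hu n; positivity) (hu _)
    _ = u (m + n) ^ 2 := (sq _).symm

namespace MeasureTheory

variable {Ω : Type*}

theorem mul_integral_le_integral_mul_of_le_condExp {m m₀ : MeasurableSpace Ω} {μ : Measure Ω}
    {f g : Ω → ℝ} {c : ℝ} (hm : m ≤ m₀) [SigmaFinite (μ.trim hm)] (hf : StronglyMeasurable[m] f)
    (hf_nonneg : 0 ≤ᵐ[μ] f) (hf_int : Integrable f μ) (hg : Integrable g μ)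
    (hfg : Integrable (f * g) μ) (hc : ∀ᵐ ω ∂μ, c ≤ μ[g|m] ω) :
    c * ∫ ω, f ω ∂μ ≤ ∫ ω, f ω * g ω ∂μ := by
  have hpull : μ[f * g|m] =ᵐ[μ] f * μ[g|m] := condExp_mul_of_stronglyMeasurable_left hf hfg hg
  calc c * ∫ ω, f ω ∂μ = ∫ ω, f ω * c ∂μ := by rw [integral_mul_const, mul_comm]
    _ ≤ ∫ ω, (f * μ[g|m]) ω ∂μ :=
      integral_mono_ae (hf_int.mul_const c) (integrable_condExp.congr hpull) <| by
        filter_upwards [hf_nonneg, hc] with ω h0 hcω using mul_le_mul_of_nonneg_left hcω h0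
    _ = ∫ ω, μ[f * g|m] ω ∂μ := integral_congr_ae hpull.symm
    _ = ∫ ω, f ω * g ω ∂μ := integral_condExp hm

variable [MeasurableSpace Ω] {μ : Measure Ω} {X : Ω → ℝ}

lemma integrable_of_eq_zero_or_eq_one [IsFiniteMeasure μ] (hX : Measurable X)
    (h01 : ∀ ω, X ω = 0 ∨ X ω = 1) : Integrable X μ :=
  .of_bound hX.aestronglyMeasurable 1 <| ae_of_all _ fun ω => by
    rcases h01 ω with h | h <;> simp [h]

lemma integral_of_eq_zero_or_eq_one (hX : Measurable X) (h01 : ∀ ω, X ω = 0 ∨ X ω = 1) :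
    ∫ ω, X ω ∂μ = μ.real {ω | X ω = 1} := by
  have hX_ind : X = {ω | X ω = 1}.indicator 1 := by
    ext ω; rcases h01 ω with h | h <;> simp [h]
  calc ∫ ω, X ω ∂μ = ∫ ω, {ω | X ω = 1}.indicator 1 ω ∂μ := by rw [← hX_ind]
    _ = μ.real {ω | X ω = 1} := integral_indicator_one (hX (measurableSet_singleton 1))

lemma integral_exp_mul_of_eq_zero_or_eq_one [IsProbabilityMeasure μ] (hX : Measurable X)
    (h01 : ∀ ω, X ω = 0 ∨ X ω = 1) (t : ℝ) :
    ∫ ω, Real.exp (t * X ω) ∂μ = 1 + (Real.exp t - 1) * μ.real {ω | X ω = 1} := by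
  simp_rw [Real.exp_mul_of_eq_zero_or_eq_one t (h01 _)]
  rw [integral_add (integrable_const 1) ((integrable_of_eq_zero_or_eq_one hX h01).const_mul _),
    integral_const_mul, integral_of_eq_zero_or_eq_one hX h01]
  simp

end MeasureTheory

def hawkesCount {Ω : Type*} (ξ : ℕ → Ω → ℝ) (n : ℕ) (ω : Ω) : ℝ := ∑ i ∈ Finset.Icc 1 n, ξ i ω

abbrev pastSigma {Ω : Type*} (ξ : ℕ → Ω → ℝ) (n : ℕ) : MeasurableSpace Ω :=
  ⨆ i ∈ Finset.Icc 1 n, MeasurableSpace.comap (ξ i) Real.measurableSpace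

namespace hawkesCount

variable {Ω : Type*} {ξ : ℕ → Ω → ℝ}

lemma succ (n : ℕ) (ω : Ω) : hawkesCount ξ (n + 1) ω = hawkesCount ξ n ω + ξ (n + 1) ω :=
  Finset.sum_Icc_succ_top (by omega) _

lemma mem_Icc (hval : ∀ n, 1 ≤ n → ∀ ω, ξ n ω = 0 ∨ ξ n ω = 1) (n : ℕ) (ω : Ω) :
    hawkesCount ξ n ω ∈ Set.Icc 0 (n : ℝ) := by
  have h01 : ∀ i ∈ Finset.Icc 1 n, ξ i ω ∈ Set.Icc (0 : ℝ) 1 := fun i hi =>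
    Set.mem_Icc_zero_one_of_eq_zero_or_eq_one (hval i (Finset.mem_Icc.1 hi).1 ω)
  refine ⟨Finset.sum_nonneg fun i hi => (h01 i hi).1, ?_⟩
  calc hawkesCount ξ n ω ≤ ∑ _i ∈ Finset.Icc 1 n, (1 : ℝ) :=
        Finset.sum_le_sum fun i hi => (h01 i hi).2
    _ = n := by simp

lemma measurable_pastSigma (n : ℕ) : Measurable[pastSigma ξ n] (hawkesCount ξ n) :=
  Finset.measurable_sum _ fun i hi => Measurable.of_comap_le <|
    le_iSup₂ (f := fun i (_ : i ∈ Finset.Icc 1 n) => MeasurableSpace.comap (ξ i) _) i hi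

variable [mΩ : MeasurableSpace Ω] {μ : Measure Ω}

lemma integrable_exp_mul [IsFiniteMeasure μ] (hmeas : ∀ n, Measurable (ξ n))
    (hval : ∀ n, 1 ≤ n → ∀ ω, ξ n ω = 0 ∨ ξ n ω = 1) (t : ℝ) (n : ℕ) :
    Integrable (fun ω => Real.exp (t * hawkesCount ξ n ω)) μ := by
  have hmeas_exp : Measurable fun ω => Real.exp (t * hawkesCount ξ n ω) :=
    ((Finset.measurable_sum _ fun i _ => hmeas i).const_mul t).exp
  refine .of_bound hmeas_exp.aestronglyMeasurable (Real.exp (|t| * n)) (ae_of_all _ fun ω => ?_)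
  obtain ⟨h0, hn⟩ := mem_Icc hval n ω
  rw [Real.norm_of_nonneg (Real.exp_pos _).le, Real.exp_le_exp]
  calc t * hawkesCount ξ n ω ≤ |t| * hawkesCount ξ n ω :=
        mul_le_mul_of_nonneg_right (le_abs_self t) h0
    _ ≤ |t| * n := mul_le_mul_of_nonneg_left hn (abs_nonneg t)

theorem mul_integral_exp_le_integral_exp_succ [IsFiniteMeasure μ] {a : ℕ → ℝ}
    (ha : ∀ i, 0 ≤ a i) (hmeas : ∀ n, Measurable (ξ n))
    (hval : ∀ n, 1 ≤ n → ∀ ω, ξ n ω = 0 ∨ ξ n ω = 1)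
    (hcond : ∀ n, 2 ≤ n →
      μ[ξ n | pastSigma ξ (n - 1)]
        =ᵐ[μ] fun ω => a 0 + ∑ i ∈ Finset.Icc 1 (n - 1), a (n - i) * ξ i ω)
    {t : ℝ} (ht : 0 ≤ t) {k : ℕ} (hk : 1 ≤ k) :
    (1 + (Real.exp t - 1) * a 0) * ∫ ω, Real.exp (t * hawkesCount ξ k ω) ∂μ ≤
      ∫ ω, Real.exp (t * hawkesCount ξ (k + 1) ω) ∂μ := by
  have hpast : pastSigma ξ k ≤ mΩ := iSup₂_le fun i _ => (hmeas i).comap_le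
  have hintensity : ∀ᵐ ω ∂μ, a 0 ≤ μ[ξ (k + 1)|pastSigma ξ k] ω := by
    have h := hcond (k + 1) (by omega)
    simp only [Nat.add_sub_cancel] at h
    filter_upwards [h] with ω hω
    exact hω ▸ le_add_of_nonneg_right (Finset.sum_nonneg fun i hi => mul_nonneg (ha _)
      (Set.mem_Icc_zero_one_of_eq_zero_or_eq_one (hval i (Finset.mem_Icc.1 hi).1 ω)).1)
  have hξ01 := hval (k + 1) (by omega)
  have hf_int := integrable_exp_mul (μ := μ) hmeas hval t k
  have hfξ_int : Integrable (fun ω => Real.exp (t * hawkesCount ξ k ω) * ξ (k + 1) ω) μ :=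
    hf_int.mul_bdd (hmeas _).aestronglyMeasurable (c := 1) <| ae_of_all _ fun ω => by
      obtain ⟨h0, h1⟩ := Set.mem_Icc_zero_one_of_eq_zero_or_eq_one (hξ01 ω)
      rwa [Real.norm_of_nonneg h0]
  have hconditioned : a 0 * ∫ ω, Real.exp (t * hawkesCount ξ k ω) ∂μ ≤
      ∫ ω, Real.exp (t * hawkesCount ξ k ω) * ξ (k + 1) ω ∂μ :=
    mul_integral_le_integral_mul_of_le_condExp hpast
      ((measurable_pastSigma k).const_mul t).exp.stronglyMeasurable
      (ae_of_all _ fun ω => (Real.exp_pos _).le) hf_int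
      (integrable_of_eq_zero_or_eq_one (hmeas _) hξ01) hfξ_int hintensity
  have hsplit : ∀ ω, Real.exp (t * hawkesCount ξ (k + 1) ω) = Real.exp (t * hawkesCount ξ k ω) +
      (Real.exp t - 1) * (Real.exp (t * hawkesCount ξ k ω) * ξ (k + 1) ω) := fun ω => by
    rw [succ, mul_add, Real.exp_add, Real.exp_mul_of_eq_zero_or_eq_one t (hξ01 ω)]
    ring
  simp_rw [hsplit]
  rw [integral_add hf_int (hfξ_int.const_mul _), integral_const_mul, add_mul, one_mul, mul_assoc]
  exact add_le_add_right (mul_le_mul_of_nonneg_left hconditioned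
    (sub_nonneg.2 (Real.one_le_exp ht))) _

end hawkesCount

theorem dthp_mgf_near_supermultiplicative_general
    {Ω : Type*} [MeasurableSpace Ω] (μ : Measure Ω) [IsProbabilityMeasure μ]
    (a : ℕ → ℝ) (ξ : ℕ → Ω → ℝ)
    (ha_pos : ∀ i, 0 < a i)
    (hmeas : ∀ n, Measurable (ξ n))
    (hval : ∀ n, 1 ≤ n → ∀ ω, ξ n ω = 0 ∨ ξ n ω = 1)
    (hinit : μ {ω | ξ 1 ω = 1} = ENNReal.ofReal (a 0))
    (hcond : ∀ n, 2 ≤ n →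
      μ[ξ n | ⨆ i ∈ Finset.Icc 1 (n - 1), MeasurableSpace.comap (ξ i) Real.measurableSpace]
        =ᵐ[μ] fun ω => a 0 + ∑ i ∈ Finset.Icc 1 (n - 1), a (n - i) * ξ i ω)
    :
    ∀ t : ℝ, 0 < t →
      (∫ ω, Real.exp (t * ξ 1 ω) ∂μ) = 1 + (Real.exp t - 1) * a 0 ∧
      ∀ m n : ℕ, 1 ≤ m → 1 ≤ n →
        (∫ ω, Real.exp (t * ∑ i ∈ Finset.Icc 1 m, ξ i ω) ∂μ) *
            (∫ ω, Real.exp (t * ∑ i ∈ Finset.Icc 1 n, ξ i ω) ∂μ) *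
            (1 + (Real.exp t - 1) * a 0) ^ (m + n) ≤
          (∫ ω, Real.exp (t * ∑ i ∈ Finset.Icc 1 (m + n), ξ i ω) ∂μ) ^ 2 := by
  intro t ht
  have ha : ∀ i, 0 ≤ a i := fun i => (ha_pos i).le
  refine ⟨?_, fun m n hm hn => ?_⟩
  · rw [integral_exp_mul_of_eq_zero_or_eq_one (hmeas 1) (hval 1 le_rfl), measureReal_def, hinit,
      ENNReal.toReal_ofReal (ha 0)]
  · have hc : 0 ≤ 1 + (Real.exp t - 1) * a 0 :=
      add_nonneg zero_le_one (mul_nonneg (sub_nonneg.2 (Real.one_le_exp ht.le)) (ha 0))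
    exact mul_mul_pow_add_le_sq_of_mul_le_succ
      (u := fun k => ∫ ω, Real.exp (t * hawkesCount ξ k ω) ∂μ) hc
      (fun k => integral_nonneg fun ω => (Real.exp_pos _).le)
      (fun k hk => hawkesCount.mul_integral_exp_le_integral_exp_succ ha hmeas hval hcond ht.le hk)
      hm hn

theorem dthp_mgf_near_supermultiplicative
    {Ω : Type*} [MeasurableSpace Ω] (μ : Measure Ω) [IsProbabilityMeasure μ]
    (a : ℕ → ℝ) (ξ : ℕ → Ω → ℝ)
    (ha_pos : ∀ i, 0 < a i)
    (ha_sum : Summable a)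
    (ha_lt_one : ∑' i, a i < 1)
    (ha_moment : Summable (fun i : ℕ => (i : ℝ) * a i))
    (hmeas : ∀ n, Measurable (ξ n))
    (hval : ∀ n, 1 ≤ n → ∀ ω, ξ n ω = 0 ∨ ξ n ω = 1)
    (hinit : μ {ω | ξ 1 ω = 1} = ENNReal.ofReal (a 0))
    (hcond : ∀ n, 2 ≤ n →
      μ[ξ n | ⨆ i ∈ Finset.Icc 1 (n - 1), MeasurableSpace.comap (ξ i) Real.measurableSpace]
        =ᵐ[μ] fun ω => a 0 + ∑ i ∈ Finset.Icc 1 (n - 1), a (n - i) * ξ i ω)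
    :
    ∀ t : ℝ, 0 < t →
      (∫ ω, Real.exp (t * ξ 1 ω) ∂μ) = 1 + (Real.exp t - 1) * a 0 ∧
      ∀ m n : ℕ, 1 ≤ m → 1 ≤ n →
        (∫ ω, Real.exp (t * ∑ i ∈ Finset.Icc 1 m, ξ i ω) ∂μ) *
            (∫ ω, Real.exp (t * ∑ i ∈ Finset.Icc 1 n, ξ i ω) ∂μ) *
            (1 + (Real.exp t - 1) * a 0) ^ (m + n) ≤
          (∫ ω, Real.exp (t * ∑ i ∈ Finset.Icc 1 (m + n), ξ i ω) ∂μ) ^ 2 :=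
  dthp_mgf_near_supermultiplicative_general μ a ξ ha_pos hmeas hval hinit hcond
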